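/- arXiv:1408.1439 — 4 statements merged into one kernel-verified Lean document; each statement's English description precedes it below -/
import Mathlib

section
/- If a sequence of Riemann integrable functions f_n : [a,b] → ℝ is uniformly bounded by a constant C (|f_n(x)| < C for all x and n), converges pointwise to a Riemann integrable function f : [a,b] → ℝ, then the integrals ∫_a^b f_n converge to ∫_a^b f. -/
open MeasureTheory Filter Set

/-! Dominated convergence with the constant `C` as dominating function: the integral over
`a..b` only sees `(a, b]`, which lies in `[a, b]`, where the bound and the pointwise limit hold. -/

theorem arzela_bounded_convergence_general
    (a b : ℝ) (hab : a ≤ b) (f : ℕ → ℝ → ℝ) (g : ℝ → ℝ)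
    (hint : ∀ n, IntervalIntegrable (f n) volume a b)
    (C : ℝ) (hbd : ∀ n, ∀ x ∈ Icc a b, |f n x| < C)
    (hptwise : ∀ x ∈ Icc a b, Tendsto (fun n => f n x) atTop (nhds (g x))) :
    Tendsto (fun n => ∫ x in a..b, f n x) atTop (nhds (∫ x in a..b, g x)) := by
  have hsub : uIoc a b ⊆ Icc a b := uIoc_of_le hab ▸ Ioc_subset_Icc_self
  exact intervalIntegral.tendsto_integral_filter_of_dominated_convergence (fun _ => C)
    (.of_forall fun n => (hint n).def'.aestronglyMeasurable)
    (.of_forall fun n => .of_forall fun x hx => (hbd n x (hsub hx)).le)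
    intervalIntegrable_const
    (.of_forall fun x hx => hptwise x (hsub hx))

/-- Arzelà's bounded convergence theorem: if Riemann integrable functions `f n` on `[a,b]`
are uniformly bounded by `C` and converge pointwise to an integrable `f`, then the
integrals converge to the integral of `f`. -/
theorem arzela_bounded_convergence
    (a b : ℝ) (hab : a ≤ b) (f : ℕ → ℝ → ℝ) (g : ℝ → ℝ)
    (hint : ∀ n, IntervalIntegrable (f n) volume a b)
    (hgint : IntervalIntegrable g volume a b)
    (C : ℝ) (hbd : ∀ n, ∀ x ∈ Icc a b, |f n x| < C)
    (hptwise : ∀ x ∈ Icc a b, Tendsto (fun n => f n x) atTop (nhds (g x))) :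
    Tendsto (fun n => ∫ x in a..b, f n x) atTop (nhds (∫ x in a..b, g x)) :=
  arzela_bounded_convergence_general a b hab f g hint C hbd hptwise
end

section
/- If f_n : [0,1] → [0,1] is a sequence of Riemann integrable functions converging pointwise to the zero function, then ∫_0^1 f_n → 0. -/
open MeasureTheory Filter Set Topology Interval

theorem intervalIntegral.tendsto_integral_of_bounded {ι : Type*} {l : Filter ι}
    [l.IsCountablyGenerated] {μ : Measure ℝ} [IsLocallyFiniteMeasure μ] {a b C : ℝ}
    {F : ι → ℝ → ℝ} {g : ℝ → ℝ}
    (hF : ∀ i, IntervalIntegrable (F i) μ a b)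
    (hbound : ∀ i, ∀ x ∈ Ι a b, |F i x| ≤ C)
    (hlim : ∀ x ∈ Ι a b, Tendsto (fun i => F i x) l (𝓝 (g x))) :
    Tendsto (fun i => ∫ x in a..b, F i x ∂μ) l (𝓝 (∫ x in a..b, g x ∂μ)) :=
  intervalIntegral.tendsto_integral_filter_of_dominated_convergence (fun _ => C)
    (.of_forall fun i => (hF i).def'.aestronglyMeasurable)
    (.of_forall fun i => .of_forall fun x hx => (Real.norm_eq_abs _).trans_le (hbound i x hx))
    intervalIntegrable_const (.of_forall hlim)

/-- Reduced Arzelà theorem: if `f n : [0,1] → [0,1]` are Riemann integrable and converge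
pointwise to zero on `[0,1]`, then their integrals tend to zero. -/
theorem arzela_unit_interval
    (f : ℕ → ℝ → ℝ)
    (hmaps : ∀ n, ∀ x ∈ Icc (0:ℝ) 1, f n x ∈ Icc (0:ℝ) 1)
    (hint : ∀ n, IntervalIntegrable (f n) volume 0 1)
    (hptwise : ∀ x ∈ Icc (0:ℝ) 1, Tendsto (fun n => f n x) atTop (nhds 0)) :
    Tendsto (fun n => ∫ x in (0:ℝ)..1, f n x) atTop (nhds 0) := by
  have huIoc_sub : Ι (0:ℝ) 1 ⊆ Icc 0 1 := uIoc_subset_uIcc.trans_eq (uIcc_of_le zero_le_one)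
  have hbound : ∀ n, ∀ x ∈ Ι (0:ℝ) 1, |f n x| ≤ 1 := fun n x hx => by
    obtain ⟨hnonneg, hle⟩ := hmaps n x (huIoc_sub hx)
    rwa [abs_of_nonneg hnonneg]
  simpa using intervalIntegral.tendsto_integral_of_bounded (g := fun _ => 0) hint hbound
    fun x hx => hptwise x (huIoc_sub hx)
end

section
/- Let {V_n} be a nested decreasing sequence of open subsets of [0,1], each containing a finite union of open intervals of total length at least ε > 0. Then the intersection ⋂_{n=1}^∞ V_n is nonempty. -/
open MeasureTheory Filter Set

theorem Antitone.nonempty_iInter_of_forall_le_measure {α ι : Type*} [MeasurableSpace α]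
    {μ : Measure α} [Preorder ι] [IsDirectedOrder ι] [(atTop : Filter ι).IsCountablyGenerated]
    {s : ι → Set α} (hs : Antitone s) (hsm : ∀ i, NullMeasurableSet (s i) μ)
    (hfin : ∃ i, μ (s i) ≠ ⊤) {c : ENNReal} (hc : c ≠ 0) (hle : ∀ i, c ≤ μ (s i)) :
    (⋂ i, s i).Nonempty := by
  refine nonempty_of_measure_ne_zero (μ := μ) ?_
  rw [hs.measure_iInter hsm hfin]
  exact ne_bot_of_le_ne_bot hc (le_iInf hle)

/-- Theorem 3 of the paper: a nested decreasing sequence of open subsets of `[0,1]`, each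
containing a finite union of open intervals of total length at least `ε > 0`, has
nonempty intersection. -/
theorem nested_open_sets_nonempty_inter
    (V : ℕ → Set ℝ) (hopen : ∀ n, IsOpen (V n)) (hsub : ∀ n, V n ⊆ Icc (0:ℝ) 1)
    (hanti : ∀ n, V (n + 1) ⊆ V n)
    (ε : ℝ) (hε : 0 < ε)
    (hlen : ∀ n, ∃ s : Finset (ℝ × ℝ),
      (⋃ p ∈ s, Ioo p.1 p.2) ⊆ V n ∧
      ENNReal.ofReal ε ≤ volume (⋃ p ∈ s, Ioo p.1 p.2)) :
    (⋂ n, V n).Nonempty := by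
  have hV₀_finite : volume (V 0) ≠ ⊤ :=
    ((measure_mono (hsub 0)).trans_lt measure_Icc_lt_top).ne
  have hε_le : ∀ n, ENNReal.ofReal ε ≤ volume (V n) := fun n => by
    obtain ⟨s, hsV, hs_vol⟩ := hlen n
    exact hs_vol.trans (measure_mono hsV)
  exact (antitone_nat_of_succ_le hanti).nonempty_iInter_of_forall_le_measure
    (fun n => (hopen n).nullMeasurableSet) ⟨0, hV₀_finite⟩ (ENNReal.ofReal_pos.2 hε).ne' hε_le
end

section
/- Let f_n : [0,1] → [0,1] be Riemann integrable functions and suppose there exist ε > 0 and sets U_n ⊆ [0,1], each a finite union of open intervals of total length at least ε, with f_n > ε on U_n. Then there exists a point x ∈ [0,1] with f_n(x) > ε for infinitely many n; in particular f_n does not converge pointwise to 0. -/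
open MeasureTheory Filter Set

/-!
The sets `V n = ⋃ k ≥ n, U k` decrease, lie in `[0, 1]` and each has measure at least `ε`, so
by continuity from above their intersection `limsup U` has measure at least `ε` and is in
particular nonempty. A point of it lies in infinitely many `U n`, hence `f n x > ε` for
infinitely many `n`.
-/

section LimsupMeasure

variable {α : Type*} [MeasurableSpace α] {μ : Measure α} {s : ℕ → Set α}

theorem le_measure_limsup_atTop_of_forall_le (hs : ∀ n, NullMeasurableSet (s n) μ)
    (hfin : μ (⋃ n, s n) ≠ ⊤) {c : ENNReal} (hc : ∀ n, c ≤ μ (s n)) :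
    c ≤ μ (limsup s atTop) := by
  have htail_anti : Antitone fun n => ⋃ k ≥ n, s k :=
    fun m n hmn => biUnion_mono (fun k hk => hmn.trans hk) fun _ _ => le_rfl
  rw [limsup_eq_iInf_iSup_of_nat, iInf_eq_iInter]
  simp only [iSup_eq_iUnion]
  rw [htail_anti.measure_iInter (fun n => .biUnion (to_countable _) fun k _ => hs k)
    ⟨0, ne_top_of_le_ne_top hfin (measure_mono (iUnion₂_subset fun k _ => subset_iUnion s k))⟩]
  exact le_iInf fun n => (hc n).trans (measure_mono (subset_iUnion₂_of_subset n le_rfl subset_rfl))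

theorem exists_frequently_mem_of_forall_le_measure (hs : ∀ n, NullMeasurableSet (s n) μ)
    (hfin : μ (⋃ n, s n) ≠ ⊤) {c : ENNReal} (hc₀ : c ≠ 0) (hc : ∀ n, c ≤ μ (s n)) :
    ∃ x, ∃ᶠ n in atTop, x ∈ s n := by
  obtain ⟨x, hx⟩ := nonempty_of_measure_ne_zero
    (ne_bot_of_le_ne_bot hc₀ (le_measure_limsup_atTop_of_forall_le hs hfin hc))
  exact ⟨x, mem_limsup_iff_frequently_mem.mp hx⟩

end LimsupMeasure

theorem not_tendsto_zero_of_frequently_lt {u : ℕ → ℝ} {ε : ℝ} (hε : 0 < ε)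
    (hu : ∃ᶠ n in atTop, ε < u n) : ¬ Tendsto u atTop (nhds 0) := fun htend =>
  hu ((htend.eventually (gt_mem_nhds hε)).mono fun _ hn => hn.not_gt)

theorem exists_point_of_nonconvergence_general
    (f : ℕ → ℝ → ℝ)
    (ε : ℝ) (hε : 0 < ε)
    (U : ℕ → Set ℝ) (hUsub : ∀ n, U n ⊆ Icc (0:ℝ) 1)
    (hUfin : ∀ n, ∃ s : Finset (ℝ × ℝ), U n = (⋃ p ∈ s, Ioo p.1 p.2) ∧
      ENNReal.ofReal ε ≤ volume (U n))
    (hf : ∀ n, ∀ x ∈ U n, ε < f n x) :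
    ∃ x ∈ Icc (0:ℝ) 1, {n : ℕ | ε < f n x}.Infinite ∧
      ¬ Tendsto (fun n => f n x) atTop (nhds 0) := by
  choose s hUs hUvol using hUfin
  have hUmeas : ∀ n, NullMeasurableSet (U n) volume := fun n => by
    rw [hUs n]
    exact ((s n).measurableSet_biUnion fun _ _ => measurableSet_Ioo).nullMeasurableSet
  have hUnion_sub : (⋃ n, U n) ⊆ Icc 0 1 := iUnion_subset hUsub
  have hUnion_fin : volume (⋃ n, U n) ≠ ⊤ :=
    ne_top_of_le_ne_top measure_Icc_lt_top.ne (measure_mono hUnion_sub)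
  obtain ⟨x, hxU⟩ := exists_frequently_mem_of_forall_le_measure hUmeas hUnion_fin
    (ENNReal.ofReal_pos.mpr hε).ne' hUvol
  obtain ⟨n, hxn⟩ := hxU.exists
  have hfx : ∃ᶠ n in atTop, ε < f n x := hxU.mono fun n hn => hf n x hn
  exact ⟨x, hUnion_sub (mem_iUnion_of_mem n hxn), Nat.frequently_atTop_iff_infinite.mp hfx,
    not_tendsto_zero_of_frequently_lt hε hfx⟩

/-- Combining Theorem 3 with the limsup construction: if each `f n` exceeds `ε` on a
finite union `U n` of open intervals of total length at least `ε`, then some point lies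
in infinitely many of the sets where `f n > ε`; in particular `f n` does not converge
pointwise to `0`. -/
theorem exists_point_of_nonconvergence
    (f : ℕ → ℝ → ℝ)
    (hmaps : ∀ n, ∀ x ∈ Icc (0:ℝ) 1, f n x ∈ Icc (0:ℝ) 1)
    (hint : ∀ n, IntervalIntegrable (f n) volume 0 1)
    (ε : ℝ) (hε : 0 < ε)
    (U : ℕ → Set ℝ) (hUsub : ∀ n, U n ⊆ Icc (0:ℝ) 1)
    (hUfin : ∀ n, ∃ s : Finset (ℝ × ℝ), U n = (⋃ p ∈ s, Ioo p.1 p.2) ∧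
      ENNReal.ofReal ε ≤ volume (U n))
    (hf : ∀ n, ∀ x ∈ U n, ε < f n x) :
    ∃ x ∈ Icc (0:ℝ) 1, {n : ℕ | ε < f n x}.Infinite ∧
      ¬ Tendsto (fun n => f n x) atTop (nhds 0) :=
  exists_point_of_nonconvergence_general f ε hε U hUsub hUfin hf
end
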